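/- Let I be a nonempty set and λ > 0, and for each ι ∈ I let y_ι : [0,∞) → ℝ be continuous on [0,∞), differentiable on (0,∞) and nonnegative, and let f_ι : (0,∞) → ℝ be continuous and nonnegative, with y_ι'(t) + λ·y_ι(t) ≤ f_ι(t) for all t > 0. Assume that sup_{ι∈I} y_ι(0) < ∞, that sup_{ι∈I} sup_{t>0} f_ι(t) < ∞, and that sup_{ι∈I} ∫_t^{t+1} f_ι(s) ds → 0 as t → ∞. Then sup_{ι∈I} y_ι(t) → 0 as t → ∞. -/

import Mathlib

/-!
With the integrating factor `e^{λs}`, the function `e^{λs} y(s) - ∫ e^{λu} f(u) du` is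
antitone, which gives the unit-step estimate `y(t) ≤ e^{-λ} y(t-1) + ∫_{t-1}^t f`. Iterating a
contraction `u(t) ≤ q u(t-1) + ε` with `q = e^{-λ} < 1` from a window where `u ≤ B` gives
`u(t) ≤ q^n B + ε/(1-q)` after `n` unit steps. Used once with `ε = sup f`, this bounds all
`y_ι` by one constant `C`; used again with `ε` the eventual bound on the unit integrals of
`f_ι`, it makes `y_ι(t) ≤ q^n C + ε/(1-q)` small. All constants depend only on `λ`,
`sup y_ι(0)` and `sup f_ι`, which makes the decay uniform in `ι`.
-/

open Set Filter Topology Real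

theorem exp_neg_mul_le_max_zero {x : ℝ} (hx : 0 ≤ x) (v : ℝ) : exp (-x) * v ≤ max v 0 := by
  rcases le_total 0 v with hv | hv
  · exact (mul_le_of_le_one_left hv (exp_le_one_iff.mpr (by linarith))).trans (le_max_left _ _)
  · exact (mul_nonpos_of_nonneg_of_nonpos (exp_pos _).le hv).trans (le_max_right _ _)

theorem intervalIntegral_le_mul_sub {f : ℝ → ℝ} {a b M : ℝ} (hab : a ≤ b)
    (hf0 : ∀ x ∈ Ioc a b, 0 ≤ f x) (hfM : ∀ x ∈ Ioc a b, f x ≤ M) :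
    ∫ x in a..b, f x ≤ M * (b - a) := by
  calc ∫ x in a..b, f x ≤ ‖∫ x in a..b, f x‖ := le_norm_self _
    _ ≤ M * |b - a| := intervalIntegral.norm_integral_le_of_norm_le_const fun x hx ↦ by
        rw [uIoc_of_le hab] at hx
        rw [norm_of_nonneg (hf0 x hx)]
        exact hfM x hx
    _ = M * (b - a) := by rw [abs_of_nonneg (sub_nonneg.mpr hab)]

section UnitStep

variable {u : ℝ → ℝ} {q ε B T : ℝ}

theorem le_pow_mul_add_div_one_sub_of_mem_Ioc (hq0 : 0 ≤ q) (hq1 : q < 1) (hε : 0 ≤ ε)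
    (hB : ∀ t ∈ Ioc T (T + 1), u t ≤ B) (hstep : ∀ t > T + 1, u t ≤ q * u (t - 1) + ε)
    (m : ℕ) :
    ∀ t ∈ Ioc (T + m) (T + m + 1), u t ≤ q ^ m * B + ε / (1 - q) := by
  have h1q : 0 < 1 - q := sub_pos.mpr hq1
  induction m with
  | zero =>
    intro t ht
    simp only [CharP.cast_eq_zero, add_zero, pow_zero, one_mul] at ht ⊢
    linarith [hB t ht, div_nonneg hε h1q.le]
  | succ m ih =>
    intro t ht
    push_cast at ht
    have hm : (0 : ℝ) ≤ m := m.cast_nonneg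
    calc u t ≤ q * u (t - 1) + ε := hstep t (by linarith [ht.1])
      _ ≤ q * (q ^ m * B + ε / (1 - q)) + ε := by
        gcongr
        exact ih (t - 1) ⟨by linarith [ht.1], by linarith [ht.2]⟩
      _ = q ^ (m + 1) * B + ε / (1 - q) := by field_simp; ring

theorem le_pow_mul_add_div_one_sub (hq0 : 0 ≤ q) (hq1 : q < 1) (hε : 0 ≤ ε) (hB0 : 0 ≤ B)
    (hB : ∀ t ∈ Ioc T (T + 1), u t ≤ B) (hstep : ∀ t > T + 1, u t ≤ q * u (t - 1) + ε)
    (n : ℕ) {t : ℝ} (ht : T + n < t) : u t ≤ q ^ n * B + ε / (1 - q) := by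
  have hn : (0 : ℝ) ≤ n := n.cast_nonneg
  obtain ⟨m, hm⟩ :=
    Nat.exists_eq_add_one_of_ne_zero (Nat.ceil_pos.mpr (by linarith : 0 < t - T)).ne'
  have hle := Nat.le_ceil (t - T)
  have hlt := Nat.ceil_lt_add_one (by linarith : 0 ≤ t - T)
  rw [hm] at hle hlt
  push_cast at hle hlt
  have hnm : n ≤ m := Nat.lt_add_one_iff.mp (by exact_mod_cast (by linarith : (n : ℝ) < m + 1))
  calc u t ≤ q ^ m * B + ε / (1 - q) :=
        le_pow_mul_add_div_one_sub_of_mem_Ioc hq0 hq1 hε hB hstep m t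
          ⟨by linarith, by linarith⟩
    _ ≤ q ^ n * B + ε / (1 - q) := by
        gcongr ?_ * B + _
        exact pow_le_pow_of_le_one hq0 hq1.le hnm

end UnitStep

structure IsODESubsolution (lam : ℝ) (y y' f : ℝ → ℝ) : Prop where
  hasDerivAt : ∀ t > (0:ℝ), HasDerivAt y (y' t) t
  continuousOn : ContinuousOn f (Ioi 0)
  deriv_add_mul_le : ∀ t > (0:ℝ), y' t + lam * y t ≤ f t

namespace IsODESubsolution

variable {lam : ℝ} {y y' f : ℝ → ℝ}

theorem antitoneOn_exp_mul_sub_integral (h : IsODESubsolution lam y y' f) {c : ℝ}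
    (hc : 0 < c) :
    AntitoneOn (fun s ↦ exp (lam * s) * y s - ∫ u in c..s, exp (lam * u) * f u) (Ioi 0) := by
  have hF : ContinuousOn (fun u ↦ exp (lam * u) * f u) (Ioi 0) :=
    (by fun_prop : Continuous fun u ↦ exp (lam * u)).continuousOn.mul h.continuousOn
  have hderiv : ∀ s ∈ Ioi (0:ℝ), HasDerivAt
      (fun s ↦ exp (lam * s) * y s - ∫ u in c..s, exp (lam * u) * f u)
      (exp (lam * s) * (y' s + lam * y s - f s)) s := by
    intro s hs
    have hexp : HasDerivAt (fun u ↦ exp (lam * u)) (exp (lam * s) * lam) s := by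
      simpa using ((hasDerivAt_id s).const_mul lam).exp
    have hint := intervalIntegral.integral_hasDerivAt_right
      (hF.mono (ordConnected_Ioi.uIcc_subset hc hs)).intervalIntegrable
      (hF.stronglyMeasurableAtFilter isOpen_Ioi s hs) (hF.continuousAt (Ioi_mem_nhds hs))
    exact ((hexp.mul (h.hasDerivAt s hs)).sub hint).congr_deriv (by ring)
  refine antitoneOn_of_hasDerivWithinAt_nonpos (convex_Ioi 0)
    (f' := fun s ↦ exp (lam * s) * (y' s + lam * y s - f s))
    (fun s hs ↦ (hderiv s hs).continuousAt.continuousWithinAt) (fun s hs ↦ ?_) (fun s hs ↦ ?_)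
  · rw [interior_Ioi] at hs
    exact (hderiv s hs).hasDerivWithinAt
  · rw [interior_Ioi] at hs
    exact mul_nonpos_of_nonneg_of_nonpos (exp_pos _).le (by linarith [h.deriv_add_mul_le s hs])

theorem exp_mul_le_add_integral (h : IsODESubsolution lam y y' f) {a b : ℝ} (ha : 0 < a)
    (hab : a ≤ b) :
    exp (lam * b) * y b ≤ exp (lam * a) * y a + ∫ u in a..b, exp (lam * u) * f u := by
  have := h.antitoneOn_exp_mul_sub_integral ha ha (ha.trans_le hab) hab
  simp only [intervalIntegral.integral_same, sub_zero] at this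
  linarith

theorem le_exp_neg_mul_add_integral (h : IsODESubsolution lam y y' f) (hlam : 0 ≤ lam)
    (hf : ∀ t > (0:ℝ), 0 ≤ f t) {a b : ℝ} (ha : 0 < a) (hab : a ≤ b) :
    y b ≤ exp (-(lam * (b - a))) * y a + ∫ u in a..b, f u := by
  have hsub : uIcc a b ⊆ Ioi 0 := ordConnected_Ioi.uIcc_subset ha (ha.trans_le hab)
  have hweight : ∫ u in a..b, exp (lam * u) * f u ≤ exp (lam * b) * ∫ u in a..b, f u := by
    rw [← intervalIntegral.integral_const_mul]
    refine intervalIntegral.integral_mono_on hab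
      (((by fun_prop : Continuous fun u ↦ exp (lam * u)).continuousOn.mul
        (h.continuousOn.mono hsub)).intervalIntegrable)
      ((h.continuousOn.mono hsub).intervalIntegrable.const_mul _) fun u hu ↦ ?_
    gcongr
    · exact hf u (ha.trans_le hu.1)
    · exact hu.2
  have hexp : exp (lam * b) * exp (-(lam * (b - a))) = exp (lam * a) := by
    rw [← exp_add]; ring_nf
  rw [← mul_le_mul_iff_of_pos_left (exp_pos (lam * b)), mul_add, ← mul_assoc, hexp]
  linarith [h.exp_mul_le_add_integral ha hab]

theorem le_max_zero_add_mul (h : IsODESubsolution lam y y' f) (hlam : 0 ≤ lam)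
    (hf0 : ∀ t > (0:ℝ), 0 ≤ f t) {Mf : ℝ} (hfM : ∀ t > (0:ℝ), f t ≤ Mf)
    (hy : ContinuousWithinAt y (Ioi 0) 0) {t : ℝ} (ht : 0 < t) :
    y t ≤ max (y 0) 0 + Mf * t := by
  have hMf : 0 ≤ Mf := (hf0 t ht).trans (hfM t ht)
  -- `f` is only controlled on `(0, ∞)`: estimate from `a > 0`, then let `a → 0⁺`.
  have hnear : ∀ᶠ a in 𝓝[>] 0, y t ≤ max (y a) 0 + Mf * t := by
    filter_upwards [Ioo_mem_nhdsGT ht] with a ha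
    calc y t ≤ exp (-(lam * (t - a))) * y a + ∫ u in a..t, f u :=
          h.le_exp_neg_mul_add_integral hlam hf0 ha.1 ha.2.le
      _ ≤ max (y a) 0 + Mf * (t - a) := add_le_add
          (exp_neg_mul_le_max_zero (mul_nonneg hlam (sub_nonneg.mpr ha.2.le)) _)
          (intervalIntegral_le_mul_sub ha.2.le (fun x hx ↦ hf0 x (ha.1.trans hx.1))
            fun x hx ↦ hfM x (ha.1.trans hx.1))
      _ ≤ max (y a) 0 + Mf * t := by nlinarith [ha.1]
  exact ge_of_tendsto ((hy.tendsto.max tendsto_const_nhds).add_const _) hnear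

theorem le_exp_neg_mul_sub_one_add_integral (h : IsODESubsolution lam y y' f)
    (hlam : 0 ≤ lam) (hf0 : ∀ t > (0:ℝ), 0 ≤ f t) {t : ℝ} (ht : 1 < t) :
    y t ≤ exp (-lam) * y (t - 1) + ∫ u in (t - 1)..t, f u := by
  have := h.le_exp_neg_mul_add_integral hlam hf0 (by linarith : 0 < t - 1) (by linarith)
  rwa [sub_sub_cancel, mul_one] at this

theorem le_add_add_div_one_sub_exp (h : IsODESubsolution lam y y' f) (hlam : 0 < lam)
    (hf0 : ∀ t > (0:ℝ), 0 ≤ f t) {M Mf : ℝ} (hM : 0 ≤ M) (hMf : 0 ≤ Mf)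
    (hy0 : y 0 ≤ M) (hfM : ∀ t > (0:ℝ), f t ≤ Mf) (hy : ContinuousWithinAt y (Ioi 0) 0)
    {t : ℝ} (ht : 0 ≤ t) :
    y t ≤ M + Mf + Mf / (1 - exp (-lam)) := by
  have h1q : 0 < 1 - exp (-lam) := sub_pos.mpr (exp_lt_one_iff.mpr (neg_lt_zero.mpr hlam))
  rcases ht.eq_or_lt with rfl | ht
  · linarith [div_nonneg hMf h1q.le]
  have hB : ∀ t ∈ Ioc (0:ℝ) (0 + 1), y t ≤ M + Mf := fun t ht ↦ by
    have := h.le_max_zero_add_mul hlam.le hf0 hfM hy ht.1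
    nlinarith [max_le hy0 hM, ht.2]
  have hstep : ∀ t > (0:ℝ) + 1, y t ≤ exp (-lam) * y (t - 1) + Mf := fun t ht ↦ by
    have := intervalIntegral_le_mul_sub (by linarith : t - 1 ≤ t)
      (fun x hx ↦ hf0 x (by linarith [hx.1])) fun x hx ↦ hfM x (by linarith [hx.1])
    linarith [h.le_exp_neg_mul_sub_one_add_integral hlam.le hf0 (by linarith : 1 < t)]
  simpa using le_pow_mul_add_div_one_sub (exp_pos _).le (sub_pos.mp h1q) hMf (by linarith) hB
    hstep 0 (by simpa using ht)

theorem le_pow_mul_add_div_one_sub_exp (h : IsODESubsolution lam y y' f) (hlam : 0 < lam)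
    (hf0 : ∀ t > (0:ℝ), 0 ≤ f t) {C : ℝ} (hC0 : 0 ≤ C) (hC : ∀ t ≥ (0:ℝ), y t ≤ C)
    {ε T : ℝ} (hε : 0 ≤ ε) (hT : ∀ t ≥ T, ∫ u in t..(t + 1), f u < ε) (n : ℕ) {t : ℝ}
    (ht : max T 0 + n < t) :
    y t ≤ exp (-lam) ^ n * C + ε / (1 - exp (-lam)) := by
  have hq1 : exp (-lam) < 1 := exp_lt_one_iff.mpr (neg_lt_zero.mpr hlam)
  refine le_pow_mul_add_div_one_sub (exp_pos _).le hq1 hε hC0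
    (fun t ht ↦ hC t ((le_max_right T 0).trans ht.1.le)) (fun t ht ↦ ?_) n ht
  have hT' := hT (t - 1) (by linarith [le_max_left T 0])
  rw [sub_add_cancel] at hT'
  linarith [h.le_exp_neg_mul_sub_one_add_integral hlam.le hf0
    (by linarith [le_max_right T 0] : 1 < t)]

end IsODESubsolution

theorem ode_family_decay_general {I : Type*} (lam : ℝ) (hlam : 0 < lam)
    (y y' f : I → ℝ → ℝ)
    (hycont : ∀ ι, ContinuousOn (y ι) (Set.Ici 0))
    (hyderiv : ∀ ι, ∀ t > (0:ℝ), HasDerivAt (y ι) (y' ι t) t)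
    (hfcont : ∀ ι, ContinuousOn (f ι) (Set.Ioi 0))
    (hfnn : ∀ ι, ∀ t > (0:ℝ), 0 ≤ f ι t)
    (hODE : ∀ ι, ∀ t > (0:ℝ), y' ι t + lam * y ι t ≤ f ι t)
    (hy0 : ∃ M : ℝ, ∀ ι, y ι 0 ≤ M)
    (hfbdd : ∃ M : ℝ, ∀ ι, ∀ t > (0:ℝ), f ι t ≤ M)
    (hfto0 : ∀ δ > (0:ℝ), ∃ T : ℝ, ∀ t ≥ T, ∀ ι, (∫ s in t..(t + 1), f ι s) < δ) :
    ∀ δ > (0:ℝ), ∃ T : ℝ, ∀ t ≥ T, ∀ ι, y ι t < δ := by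
  intro δ hδ
  obtain ⟨M, hM⟩ := hy0
  obtain ⟨Mf, hMf⟩ := hfbdd
  have hsub ι : IsODESubsolution lam (y ι) (y' ι) (f ι) := ⟨hyderiv ι, hfcont ι, hODE ι⟩
  set q := exp (-lam)
  have hq1 : q < 1 := exp_lt_one_iff.mpr (neg_lt_zero.mpr hlam)
  have h1q : 0 < 1 - q := sub_pos.mpr hq1
  set C := max M 0 + max Mf 0 + max Mf 0 / (1 - q)
  have hC0 : 0 ≤ C := add_nonneg (by positivity) (div_nonneg (le_max_right _ _) h1q.le)
  have hbound ι : ∀ t ≥ (0:ℝ), y ι t ≤ C := fun t ht ↦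
    (hsub ι).le_add_add_div_one_sub_exp hlam (hfnn ι) (le_max_right M 0) (le_max_right Mf 0)
      ((hM ι).trans (le_max_left _ _)) (fun t ht ↦ (hMf ι t ht).trans (le_max_left _ _))
      ((hycont ι 0 self_mem_Ici).mono Ioi_subset_Ici_self) ht
  obtain ⟨T, hT⟩ := hfto0 (δ / 2 * (1 - q)) (by positivity)
  obtain ⟨n, hn⟩ := exists_pow_lt_of_lt_one (by positivity : 0 < δ / 2 / (C + 1)) hq1
  refine ⟨max T 0 + n + 1, fun t ht ι ↦ ?_⟩
  have hqn : q ^ n * C < δ / 2 := by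
    rw [lt_div_iff₀ (by positivity)] at hn
    nlinarith [pow_pos (exp_pos (-lam)) n]
  calc y ι t ≤ q ^ n * C + δ / 2 * (1 - q) / (1 - q) :=
        (hsub ι).le_pow_mul_add_div_one_sub_exp hlam (hfnn ι) hC0 (hbound ι) (by positivity)
          (fun t ht ↦ hT t ht ι) n (by linarith)
    _ < δ := by rw [mul_div_cancel_right₀ _ h1q.ne']; linarith

/-- Uniform ODE comparison lemma (Lemma 6.2): if for each `ι` in a nonempty family `I`
the nonnegative functions `y_ι` satisfy `y_ι' + λ y_ι ≤ f_ι` on `(0,∞)` with nonnegative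
continuous `f_ι`, uniformly bounded initial data `y_ι(0)`, uniformly bounded `f_ι`, and
`sup_ι ∫_t^{t+1} f_ι → 0` as `t → ∞`, then `sup_ι y_ι(t) → 0` as `t → ∞`. -/
theorem ode_family_decay {I : Type*} [Nonempty I] (lam : ℝ) (hlam : 0 < lam)
    (y y' f : I → ℝ → ℝ)
    (hycont : ∀ ι, ContinuousOn (y ι) (Set.Ici 0))
    (hyderiv : ∀ ι, ∀ t > (0:ℝ), HasDerivAt (y ι) (y' ι t) t)
    (hynn : ∀ ι, ∀ t ≥ (0:ℝ), 0 ≤ y ι t)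
    (hfcont : ∀ ι, ContinuousOn (f ι) (Set.Ioi 0))
    (hfnn : ∀ ι, ∀ t > (0:ℝ), 0 ≤ f ι t)
    (hODE : ∀ ι, ∀ t > (0:ℝ), y' ι t + lam * y ι t ≤ f ι t)
    (hy0 : ∃ M : ℝ, ∀ ι, y ι 0 ≤ M)
    (hfbdd : ∃ M : ℝ, ∀ ι, ∀ t > (0:ℝ), f ι t ≤ M)
    (hfto0 : ∀ δ > (0:ℝ), ∃ T : ℝ, ∀ t ≥ T, ∀ ι, (∫ s in t..(t + 1), f ι s) < δ) :
    ∀ δ > (0:ℝ), ∃ T : ℝ, ∀ t ≥ T, ∀ ι, y ι t < δ :=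
  ode_family_decay_general lam hlam y y' f hycont hyderiv hfcont hfnn hODE hy0 hfbdd hfto0
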